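/- The Lukasiewicz conjunction does not satisfy property P1: there exist events A, H, B, K with A|H ⊆ B|K (Goodman–Nguyen inclusion) but (A|H) ∧_L (B|K) ≠ A|H. Indeed, when A|H ⊆ B|K one has (A|H) ∧_L (B|K) = AH | (H ∨ ¬H¬K), which is false on ¬H¬K while A|H is void there. -/

import Mathlib

/-- The three truth values of de Finetti's trivalent logic. -/
inductive TV : Type
  | true : TV
  | false : TV
  | void : TV
deriving DecidableEq

open Classical in
/-- The conditional event `E|F`: true on `E∩F`, false on `Eᶜ∩F`, void on `Fᶜ`. -/
noncomputable def condEv {Ω : Type*} (E F : Set Ω) : Ω → TV := fun ω =>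
  if ω ∈ F then (if ω ∈ E then TV.true else TV.false) else TV.void

/-- The Łukasiewicz conjunction
`(A|H) ∧_L (B|K) = AHBK | (AHBK ∨ ¬AH ∨ ¬BK ∨ ¬H¬K)`. -/
noncomputable def conjL {Ω : Type*} (A H B K : Set Ω) : Ω → TV :=
  condEv (A ∩ H ∩ (B ∩ K)) (A ∩ H ∩ (B ∩ K) ∪ Aᶜ ∩ H ∪ Bᶜ ∩ K ∪ Hᶜ ∩ Kᶜ)

/-!
Under the Goodman–Nguyen inclusion `AH ⊆ BK`, `¬BK ⊆ ¬AH`, the conjunct `AHBK` collapses to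
`AH` and the disjunct `¬BK` of the conditioning event is absorbed by `¬AH`, so
`(A|H) ∧_L (B|K) = AH | (H ∨ ¬H¬K)`. Its conditioning event strictly contains `H` as soon as
`¬H¬K ≠ ∅`, and conditional events with different conditioning events differ.
-/

section CondEv

variable {Ω : Type*}

theorem condEv_eq_void_iff {E F : Set Ω} {ω : Ω} : condEv E F ω = TV.void ↔ ω ∉ F := by
  unfold condEv
  split_ifs <;> simp_all

theorem condEv_ne_of_mem_diff {E F E' F' : Set Ω} {ω : Ω} (hω : ω ∈ F' \ F) :
    condEv E' F' ≠ condEv E F := fun h => by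
  have hvoid : condEv E F ω = TV.void := condEv_eq_void_iff.mpr hω.2
  exact condEv_eq_void_iff.mp (congrFun h ω ▸ hvoid) hω.1

end CondEv

section GoodmanNguyen

variable {Ω : Type*} {A H B K : Set Ω}

theorem conjL_eq_of_goodmanNguyen (hAB : A ∩ H ⊆ B ∩ K) (hBA : Bᶜ ∩ K ⊆ Aᶜ ∩ H) :
    conjL A H B K = condEv (A ∩ H) (H ∪ Hᶜ ∩ Kᶜ) := by
  have hconj : A ∩ H ∩ (B ∩ K) = A ∩ H := Set.inter_eq_left.mpr hAB
  have hcond : A ∩ H ∪ Aᶜ ∩ H ∪ Bᶜ ∩ K = H := by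
    rw [← Set.union_inter_distrib_right, Set.union_compl_self, Set.univ_inter]
    exact Set.union_eq_left.mpr (hBA.trans Set.inter_subset_right)
  rw [conjL, hconj, hcond]

theorem conjL_ne_condEv_of_goodmanNguyen (hAB : A ∩ H ⊆ B ∩ K) (hBA : Bᶜ ∩ K ⊆ Aᶜ ∩ H)
    (hHK : (Hᶜ ∩ Kᶜ).Nonempty) : conjL A H B K ≠ condEv A H := by
  obtain ⟨ω, hω⟩ := hHK
  rw [conjL_eq_of_goodmanNguyen hAB hBA]
  exact condEv_ne_of_mem_diff ⟨Or.inr hω, hω.1⟩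

end GoodmanNguyen

/-- Failure of P1 for `∧_L`: whenever the Goodman–Nguyen inclusion
`A|H ⊆ B|K` holds (`AH ⊆ BK` and `¬BK ⊆ ¬AH`) one has
`(A|H) ∧_L (B|K) = AH | (H ∨ ¬H¬K)`, which (when `¬H¬K ≠ ∅`) differs from
`A|H`, being false on `¬H¬K` while `A|H` is void there.  In particular there
exist events `A, H, B, K` with `A|H ⊆ B|K` but `(A|H) ∧_L (B|K) ≠ A|H`. -/
theorem conjL_fails_P1 :
    (∀ (Ω : Type) (A H B K : Set Ω),
        A ∩ H ⊆ B ∩ K → Bᶜ ∩ K ⊆ Aᶜ ∩ H →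
          conjL A H B K = condEv (A ∩ H) (H ∪ Hᶜ ∩ Kᶜ)) ∧
    (∃ (Ω : Type) (A H B K : Set Ω),
        H.Nonempty ∧ K.Nonempty ∧ (Hᶜ ∩ Kᶜ).Nonempty ∧
        A ∩ H ⊆ B ∩ K ∧ Bᶜ ∩ K ⊆ Aᶜ ∩ H ∧
        conjL A H B K ≠ condEv A H) := by
  refine ⟨fun _ _ _ _ _ => conjL_eq_of_goodmanNguyen, ?_⟩
  let E : Set Bool := {true}
  have hAB : E ∩ E ⊆ E ∩ E := subset_rfl
  have hBA : Eᶜ ∩ E ⊆ Eᶜ ∩ E := subset_rfl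
  have hHK : (Eᶜ ∩ Eᶜ).Nonempty := ⟨false, by simp [E]⟩
  exact ⟨Bool, E, E, E, E, ⟨true, rfl⟩, ⟨true, rfl⟩, hHK, hAB, hBA,
    conjL_ne_condEv_of_goodmanNguyen hAB hBA hHK⟩
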